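/- Let n > 2 and m be positive integers with φ(P_n) = P_m. Then the quotient P_n/rad(P_n), where rad(P_n) is the product of the distinct prime factors of P_n, divides P_{n−m}. -/
import Mathlib

/-- The Pell sequence: `P 0 = 0`, `P 1 = 1`, `P (n+2) = 2 * P (n+1) + P n`. -/
def pell : ℕ → ℕ
  | 0 => 0
  | 1 => 1
  | n + 2 => 2 * pell (n + 1) + pell n

lemma pell_add_two (n : ℕ) : pell (n+2) = 2 * pell (n+1) + pell n := rfl

lemma pell_pos : ∀ n : ℕ, 0 < pell (n+1)
  | 0 => Nat.one_pos
  | n+1 => by have := pell_pos n; rw [pell_add_two]; omega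

lemma pell_lt_succ (n : ℕ) : pell n < pell (n+1) := by
  cases n with
  | zero => decide
  | succ k => have := pell_pos k; rw [pell_add_two]; omega

lemma pell_strictMono : StrictMono pell := strictMono_nat_of_lt_succ pell_lt_succ

lemma pell_add (m n : ℕ) :
    pell (m + n + 1) = pell (m+1) * pell (n+1) + pell m * pell n := by
  induction n using Nat.twoStepInduction generalizing m with
  | zero => simp [pell]
  | one =>
    show pell (m + 2) = _
    rw [pell_add_two]
    show _ = pell (m+1) * pell 2 + pell m * pell 1
    simp [pell]; ring
  | more n ih1 ih2 =>
    have e : m + (n+2) + 1 = (m + n + 1) + 2 := by ring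
    rw [e, pell_add_two, show m + n + 1 + 1 = m + (n+1) + 1 by ring, ih2,
      ih1, show n+2+1 = (n+1)+2 by ring, pell_add_two (n+1), pell_add_two n]
    ring

lemma pell_coprime (n : ℕ) : Nat.Coprime (pell n) (pell (n+1)) := by
  induction n with
  | zero => decide
  | succ k ih =>
    rw [pell_add_two]
    have e : 2 * pell (k+1) + pell k = pell k + pell (k+1) * 2 := by ring
    rw [e]
    exact (Nat.coprime_add_mul_left_right (pell (k+1)) (pell k) 2).mpr ih.symm

lemma div_radical_dvd_totient (N : ℕ) (hN : N ≠ 0) :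
    N / (∏ p ∈ N.primeFactors, p) ∣ N.totient := by
  have h1 : (∏ p ∈ N.primeFactors, p ^ (N.factorization p - 1)) *
      (∏ p ∈ N.primeFactors, p) = N := by
    rw [← Finset.prod_mul_distrib]
    conv_rhs => rw [← Nat.factorization_prod_pow_eq_self hN]
    rw [Finsupp.prod, Nat.support_factorization]
    refine Finset.prod_congr rfl fun p hp => ?_
    have hk : N.factorization p ≠ 0 := by
      rw [← Nat.support_factorization] at hp
      exact Finsupp.mem_support_iff.mp hp
    rw [← pow_succ]
    congr 1
    omega
  have hdiv : N / (∏ p ∈ N.primeFactors, p) =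
      ∏ p ∈ N.primeFactors, p ^ (N.factorization p - 1) := by
    have hpos : 0 < ∏ p ∈ N.primeFactors, p :=
      Finset.prod_pos fun p hp => (Nat.prime_of_mem_primeFactors hp).pos
    exact Nat.div_eq_of_eq_mul_left hpos h1.symm
  rw [hdiv, Nat.totient_eq_prod_factorization hN, Finsupp.prod,
    Nat.support_factorization]
  exact Finset.prod_dvd_prod_of_dvd _ _ fun p _ => dvd_mul_right _ _

/-- If `n > 2`, `m > 0` and `φ(P n) = P m`, then `P n / rad (P n)` divides
`P (n - m)`, where `rad N` is the product of the distinct prime factors of `N`. -/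
theorem pell_div_radical_dvd (n m : ℕ) (hn : 2 < n) (hm : 0 < m)
    (h : Nat.totient (pell n) = pell m) :
    pell n / (∏ p ∈ (pell n).primeFactors, p) ∣ pell (n - m) := by
  have h5 : 5 ≤ pell n := by
    have := pell_strictMono.monotone hn
    simpa [show pell 3 = 5 from rfl] using this
  set x := pell n / (∏ p ∈ (pell n).primeFactors, p) with hx
  have hxm : x ∣ pell m := by
    rw [← h]; exact div_radical_dvd_totient _ (by omega)
  have hxN : x ∣ pell n :=
    Nat.div_dvd_of_dvd (Nat.prod_primeFactors_dvd _)
  have hlt : pell m < pell n := by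
    rw [← h]; exact Nat.totient_lt _ (by omega)
  have hmn : m < n := pell_strictMono.lt_iff_lt.mp hlt
  have hd := pell_add (n - m - 1) m
  rw [show n - m - 1 + m + 1 = n by omega, show n - m - 1 + 1 = n - m by omega] at hd
  have h2 : x ∣ pell (n - m) * pell (m+1) := by
    have hsub := Nat.dvd_sub hxN (hxm.mul_left (pell (n - m - 1)))
    rw [hd, Nat.add_sub_cancel] at hsub
    exact hsub
  exact ((pell_coprime m).coprime_dvd_left hxm).dvd_of_dvd_mul_right h2
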